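/- arXiv:quant-ph/0502024 — 8 statements merged into one kernel-verified Lean document; each statement's English description precedes it below -/
import Mathlib

section
/- If d is not divisible by 4, then there do not exist two mutually unbiased orthonormal bases of R^d (for d > 2). -/
open Matrix


/-- If `d > 2` is not divisible by 4, then there do not exist two mutually
unbiased orthonormal bases of `ℝ^d`. -/
theorem no_two_real_MUBs_of_not_four_dvd
    (d : ℕ) (hd : 2 < d) (h4 : ¬ (4 ∣ d)) :
    ¬ ∃ B B' : Fin d → (Fin d → ℝ),
      (∀ i j, ∑ k, B i k * B j k = if i = j then 1 else 0) ∧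
      (∀ i j, ∑ k, B' i k * B' j k = if i = j then 1 else 0) ∧
      (∀ i j, |∑ k, B i k * B' j k| = 1 / Real.sqrt d) := by
  rintro ⟨B, B', hB, hB', hM⟩
  have hdpos : (0:ℝ) < d := by exact_mod_cast (by omega : 0 < d)
  set sd := Real.sqrt d with hsd
  have hs : 0 < sd := Real.sqrt_pos.mpr hdpos
  have hs2 : sd * sd = d := Real.mul_self_sqrt hdpos.le
  set A : Matrix (Fin d) (Fin d) ℝ := Matrix.of B with hA_def
  set C : Matrix (Fin d) (Fin d) ℝ := Matrix.of B' with hC_def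
  have hA : A * Aᵀ = 1 := by
    ext i j
    simpa [A, Matrix.mul_apply, Matrix.one_apply] using hB i j
  have hC : C * Cᵀ = 1 := by
    ext i j
    simpa [C, Matrix.mul_apply, Matrix.one_apply] using hB' i j
  have hCt : Cᵀ * C = 1 := mul_eq_one_comm.mp hC
  set M : Matrix (Fin d) (Fin d) ℝ := A * Cᵀ with hM_def
  have hMM : M * Mᵀ = 1 := by
    have h1 : M * Mᵀ = A * ((Cᵀ * C) * Aᵀ) := by
      simp [M, Matrix.transpose_mul, Matrix.mul_assoc]
    rw [h1, hCt, Matrix.one_mul, hA]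
  have horth : ∀ i j, ∑ k, M i k * M j k = if i = j then (1:ℝ) else 0 := by
    intro i j
    have := congrArg (fun X : Matrix (Fin d) (Fin d) ℝ => X i j) hMM
    simpa [Matrix.mul_apply, Matrix.one_apply] using this
  have hMij : ∀ i j, |M i j| = 1 / sd := by
    intro i j
    simpa [M, A, C, Matrix.mul_apply] using hM i j
  set H : Fin d → Fin d → ℝ := fun i j => sd * M i j with hH_def
  have hpm : ∀ i j, H i j = 1 ∨ H i j = -1 := by
    intro i j
    have habs : |H i j| = 1 := by
      rw [hH_def]
      rw [abs_mul, abs_of_pos hs, hMij]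
      field_simp
    rcases abs_eq (by norm_num : (0:ℝ) ≤ 1) |>.mp habs with h | h
    · exact Or.inl h
    · exact Or.inr h
  have hrow : ∀ i j, ∑ k, H i k * H j k = if i = j then (d:ℝ) else 0 := by
    intro i j
    have h1 : ∑ k, H i k * H j k = (sd * sd) * ∑ k, M i k * M j k := by
      rw [Finset.mul_sum]
      exact Finset.sum_congr rfl fun k _ => by simp [H]; ring
    rw [h1, horth, hs2]
    split <;> ring
  have h2d : 2 < d := hd
  set i0 : Fin d := ⟨0, by omega⟩
  set i1 : Fin d := ⟨1, by omega⟩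
  set i2 : Fin d := ⟨2, by omega⟩
  have hne01 : i0 ≠ i1 := by simp [i0, i1, Fin.ext_iff]
  have hne02 : i0 ≠ i2 := by simp [i0, i2, Fin.ext_iff]
  have hne10 : i1 ≠ i0 := by simp [i0, i1, Fin.ext_iff]
  have hne12 : i1 ≠ i2 := by simp [i1, i2, Fin.ext_iff]
  have hS : ∑ k, (H i0 k + H i1 k) * (H i0 k + H i2 k) = (d:ℝ) := by
    have hexp : ∀ k, (H i0 k + H i1 k) * (H i0 k + H i2 k)
        = H i0 k * H i0 k + H i0 k * H i2 k + (H i1 k * H i0 k + H i1 k * H i2 k) :=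
      fun k => by ring
    calc ∑ k, (H i0 k + H i1 k) * (H i0 k + H i2 k)
        = ∑ k, (H i0 k * H i0 k + H i0 k * H i2 k
            + (H i1 k * H i0 k + H i1 k * H i2 k)) := Finset.sum_congr rfl fun k _ => hexp k
      _ = (∑ k, H i0 k * H i0 k) + (∑ k, H i0 k * H i2 k)
            + ((∑ k, H i1 k * H i0 k) + (∑ k, H i1 k * H i2 k)) := by
          rw [Finset.sum_add_distrib, Finset.sum_add_distrib, Finset.sum_add_distrib]
      _ = (d:ℝ) := by
          rw [hrow, hrow, hrow, hrow]
          simp [hne02, hne10, hne12]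
  set g : Fin d → ℕ := fun k => if H i0 k = H i1 k ∧ H i0 k = H i2 k then 1 else 0 with hg
  have hterm : ∀ k, (H i0 k + H i1 k) * (H i0 k + H i2 k) = 4 * (g k : ℝ) := by
    intro k
    rcases hpm i0 k with e0 | e0 <;> rcases hpm i1 k with e1 | e1 <;>
      rcases hpm i2 k with e2 | e2 <;> simp [g, e0, e1, e2] <;> norm_num
  have hcast : (d:ℝ) = ((4 * ∑ k, g k : ℕ) : ℝ) := by
    rw [← hS]
    push_cast
    rw [Finset.mul_sum]
    exact Finset.sum_congr rfl fun k _ => hterm k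
  have hd4 : d = 4 * ∑ k, g k := Nat.cast_injective hcast
  exact h4 ⟨_, hd4⟩
end

section
/- If d is divisible by 4 but d is not a perfect square, then there do not exist three pairwise mutually unbiased orthonormal bases of R^d. -/
open Matrix BigOperators

/-- If `4 ∣ d` but `d` is not a perfect square, then there do not exist three
pairwise mutually unbiased orthonormal bases of `ℝ^d`. -/
theorem no_three_real_MUBs_of_not_square
    (d : ℕ) (h4 : 4 ∣ d) (hsq : ¬ IsSquare d) :
    ¬ ∃ B : Fin 3 → Fin d → (Fin d → ℝ),
      (∀ m i j, ∑ k, B m i k * B m j k = if i = j then 1 else 0) ∧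
      (∀ m m', m ≠ m' → ∀ i j, |∑ k, B m i k * B m' j k| = 1 / Real.sqrt d) := by
  rintro ⟨B, horth, hmub⟩
  have hd0 : d ≠ 0 := by rintro rfl; exact hsq ⟨0, rfl⟩
  have hdpos : (0:ℝ) < d := by exact_mod_cast Nat.pos_of_ne_zero hd0
  set s := Real.sqrt d with hs_def
  have hs : 0 < s := Real.sqrt_pos.mpr hdpos
  have hs2 : s * s = d := Real.mul_self_sqrt hdpos.le
  -- matrices of the bases
  set A : Fin 3 → Matrix (Fin d) (Fin d) ℝ := fun m => Matrix.of (B m) with hA_def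
  have hA : ∀ m, A m * (A m)ᵀ = 1 := by
    intro m; ext i j
    simpa [Matrix.mul_apply, Matrix.one_apply, hA_def] using horth m i j
  have hA' : (A 0)ᵀ * A 0 = 1 := mul_eq_one_comm.mp (hA 0)
  have key : A 1 * (A 2)ᵀ = (A 1 * (A 0)ᵀ) * (A 0 * (A 2)ᵀ) := by
    rw [Matrix.mul_assoc, ← Matrix.mul_assoc (A 0)ᵀ, hA', Matrix.one_mul]
  obtain ⟨i⟩ : Nonempty (Fin d) := ⟨⟨0, Nat.pos_of_ne_zero hd0⟩⟩
  have keyii := congrFun (congrFun key i) i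
  have hM : ∑ k, B 1 i k * B 2 i k =
      ∑ l, (∑ k, B 1 i k * B 0 l k) * (∑ k, B 0 l k * B 2 i k) := by
    simpa [Matrix.mul_apply, Matrix.transpose_apply, hA_def, Finset.sum_mul,
      Finset.mul_sum] using keyii
  -- each summand times d is ±1
  have hterm : ∀ l : Fin d, ∃ z : ℤ,
      (d : ℝ) * ((∑ k, B 1 i k * B 0 l k) * (∑ k, B 0 l k * B 2 i k)) = z := by
    intro l
    have h10 : |∑ k, B 1 i k * B 0 l k| = 1 / s := hmub 1 0 (by decide) i l
    have h02 : |∑ k, B 0 l k * B 2 i k| = 1 / s := hmub 0 2 (by decide) l i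
    have habs : |(d : ℝ) * ((∑ k, B 1 i k * B 0 l k) * (∑ k, B 0 l k * B 2 i k))| = 1 := by
      rw [abs_mul, abs_mul, h10, h02]
      rw [abs_of_pos hdpos]
      field_simp
      linarith [hs2]
    rcases abs_eq (by norm_num : (0:ℝ) ≤ 1) |>.mp habs with h | h
    · exact ⟨1, by simpa using h⟩
    · exact ⟨-1, by simpa using h⟩
  choose ε hε using hterm
  have hsum : (d : ℝ) * (∑ k, B 1 i k * B 2 i k) = ((∑ l, ε l : ℤ) : ℝ) := by
    rw [hM, Finset.mul_sum]
    push_cast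
    exact Finset.sum_congr rfl fun l _ => hε l
  have habs12 : |∑ k, B 1 i k * B 2 i k| = 1 / s := hmub 1 2 (by decide) i i
  set n : ℤ := ∑ l, ε l with hn
  have h1 : |(n : ℝ)| = s := by
    rw [← hsum, abs_mul, habs12, abs_of_pos hdpos]
    field_simp
    linarith [hs2]
  have h2 : (d : ℝ) = ((n.natAbs : ℕ) : ℝ) * ((n.natAbs : ℕ) : ℝ) := by
    have : ((n.natAbs : ℕ) : ℝ) = |(n : ℝ)| := by
      push_cast [Nat.cast_natAbs]
      rfl
    rw [this, h1, hs2]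
  exact hsq ⟨n.natAbs, by exact_mod_cast h2⟩
end

section
/- If d = 4s² with s an odd positive integer, then there do not exist three vectors v₁, v₂, v₃ in {-1,1}^d such that |⟨vᵢ, vⱼ⟩| = 2s for all i ≠ j. -/
/-- If `d = 4s²` with `s` an odd positive integer, then there do not exist three
vectors in `{-1,1}^d` with pairwise inner products of absolute value `2s`. -/
theorem no_three_unbiased_lattice_lines
    (s : ℕ) (hs : Odd s) (hpos : 0 < s) :
    ¬ ∃ v : Fin 3 → (Fin (4 * s^2) → ℝ),
      (∀ m i, v m i = 1 ∨ v m i = -1) ∧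
      (∀ m m', m ≠ m' → |∑ i, v m i * v m' i| = 2 * s) := by
  classical
  rintro ⟨v, hpm, hip⟩
  -- integer model
  set w : Fin 3 → Fin (4 * s^2) → ℤ := fun m i => if v m i = 1 then 1 else -1 with hw
  have hwv : ∀ m i, ((w m i : ℤ) : ℝ) = v m i := by
    intro m i
    rcases hpm m i with h | h <;> simp [hw, h] <;> norm_num
  have hcast : ∀ m m', ((∑ i, w m i * w m' i : ℤ) : ℝ) = ∑ i, v m i * v m' i := by
    intro m m'
    push_cast
    exact Finset.sum_congr rfl fun i _ => by rw [hwv, hwv]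
  have habs : ∀ m m', m ≠ m' → |∑ i, w m i * w m' i| = 2 * s := by
    intro m m' h
    have h2 := hip m m' h
    rw [← hcast] at h2
    exact_mod_cast h2
  have hw1 : ∀ m i, w m i = 1 ∨ w m i = -1 := by
    intro m i; rcases hpm m i with h | h <;> simp [hw, h] <;> norm_num
  -- pointwise identity
  set p : Fin (4 * s^2) → Prop := fun i => w 0 i * w 1 i = 1 ∧ w 0 i * w 2 i = 1 with hp
  set A := Finset.univ.filter p with hA
  have hpt : ∀ i, w 0 i * w 1 i + w 0 i * w 2 i + w 1 i * w 2 i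
      = (if i ∈ A then (3:ℤ) else -1) := by
    intro i
    simp only [hA, hp, Finset.mem_filter, Finset.mem_univ, true_and]
    rcases hw1 0 i with h0|h0 <;> rcases hw1 1 i with h1|h1 <;> rcases hw1 2 i with h2|h2 <;>
      rw [h0, h1, h2] <;> norm_num
  have hcard : (Finset.univ.filter p).card
      + (Finset.univ.filter (fun i => ¬ p i)).card = 4 * s^2 := by
    rw [Finset.card_filter_add_card_filter_not]
    simp
  have hsum : (∑ i, w 0 i * w 1 i) + (∑ i, w 0 i * w 2 i) + (∑ i, w 1 i * w 2 i)
      = 4 * (A.card : ℤ) - 4 * ((s^2 : ℕ) : ℤ) := by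
    rw [← Finset.sum_add_distrib, ← Finset.sum_add_distrib]
    rw [Finset.sum_congr rfl fun i _ => hpt i]
    rw [Finset.sum_ite]
    simp only [Finset.sum_const, smul_eq_mul]
    have hAcard : (Finset.univ.filter (fun i => i ∈ A)).card = A.card := by
      simp [Finset.filter_mem_eq_inter]
    have hAcard' : (Finset.univ.filter (fun i => i ∉ A)).card
        = (Finset.univ.filter (fun i => ¬ p i)).card := by
      congr 1
      ext i
      simp [hA]
    rw [hAcard, hAcard']
    simp only [nsmul_eq_mul]
    have h4 := hcard
    rw [← hA] at h4
    omega
  have h01 := habs 0 1 (by decide)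
  have h02 := habs 0 2 (by decide)
  have h12 := habs 1 2 (by decide)
  rw [abs_eq (by positivity : (0:ℤ) ≤ 2 * s)] at h01 h02 h12
  obtain ⟨t, ht⟩ := hs
  rcases h01 with h|h <;> rcases h02 with h'|h' <;> rcases h12 with h''|h'' <;>
    rw [h, h', h''] at hsum <;> omega
end

section
/- If d = 4s² with s an odd positive integer, then there are at most 2 pairwise mutually unbiased lattice lines in R^d, i.e., at most 2 vectors in {-1,1}^d with pairwise inner products of absolute value 2s. -/
/-- If `d = 4s²` with `s` an odd positive integer, then there are at most 2
pairwise mutually unbiased lattice lines in `ℝ^d`: any finite set of vectors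
in `{-1,1}^d` with pairwise inner products of absolute value `2s` has at most
2 elements. -/
theorem at_most_two_unbiased_lattice_lines
    (s : ℕ) (hs : Odd s) (hpos : 0 < s)
    (S : Finset (Fin (4 * s^2) → ℝ))
    (hS : ∀ v ∈ S, ∀ i, v i = 1 ∨ v i = -1)
    (hunb : ∀ v ∈ S, ∀ w ∈ S, v ≠ w → |∑ i, v i * w i| = 2 * s) :
    S.card ≤ 2 := by
  by_contra h
  push_neg at h
  obtain ⟨T, hTS, hT3⟩ := Finset.exists_subset_card_eq h
  obtain ⟨u, v, w, huv, huw, hvw, rfl⟩ := Finset.card_eq_three.mp hT3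
  have hu : u ∈ S := hTS (by simp)
  have hv : v ∈ S := hTS (by simp)
  have hw : w ∈ S := hTS (by simp)
  have habs : ∀ x ∈ S, ∀ y ∈ S, x ≠ y →
      (∑ i, x i * y i) = 2 * s ∨ (∑ i, x i * y i) = -(2 * s) := by
    intro x hx y hy hxy
    exact (abs_eq (by positivity)).mp (hunb x hx y hy hxy)
  have hp := habs u hu v hv huv
  have hq := habs u hu w hw huw
  have hr := habs v hv w hw hvw
  -- expansion identity
  have hsq : ∀ i, (1 + u i * v i) * (1 + u i * w i)
      = 1 + u i * v i + u i * w i + v i * w i := by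
    intro i
    rcases hS u hu i with h1 | h1 <;> rw [h1] <;> ring
  have hsum : ∑ i, (1 + u i * v i) * (1 + u i * w i)
      = (4 * s ^ 2 : ℝ) + (∑ i, u i * v i) + (∑ i, u i * w i) + (∑ i, v i * w i) := by
    rw [Finset.sum_congr rfl (fun i _ => hsq i)]
    rw [Finset.sum_add_distrib, Finset.sum_add_distrib, Finset.sum_add_distrib,
      Finset.sum_const, Finset.card_univ, Fintype.card_fin]
    push_cast
    ring
  -- each term is 0 or 4
  have hterm : ∀ i, (1 + u i * v i) * (1 + u i * w i)
      = if u i * v i = 1 ∧ u i * w i = 1 then (4 : ℝ) else 0 := by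
    intro i
    rcases hS u hu i with h1 | h1 <;> rcases hS v hv i with h2 | h2 <;>
      rcases hS w hw i with h3 | h3 <;> rw [h1, h2, h3] <;> norm_num
  have hk : ∃ k : ℕ, ∑ i, (1 + u i * v i) * (1 + u i * w i) = 4 * (k : ℝ) := by
    refine ⟨(Finset.univ.filter (fun i => u i * v i = 1 ∧ u i * w i = 1)).card, ?_⟩
    rw [Finset.sum_congr rfl (fun i _ => hterm i), Finset.sum_ite,
      Finset.sum_const, Finset.sum_const_zero]
    simp [mul_comm]
  obtain ⟨k, hk⟩ := hk
  have key : ∃ e : ℤ, Odd e ∧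
      (∑ i, u i * v i) + (∑ i, u i * w i) + (∑ i, v i * w i) = 2 * s * (e : ℝ) := by
    rcases hp with hp | hp <;> rcases hq with hq | hq <;> rcases hr with hr | hr <;>
      rw [hp, hq, hr]
    · exact ⟨3, ⟨1, by ring⟩, by push_cast; ring⟩
    · exact ⟨1, ⟨0, by ring⟩, by push_cast; ring⟩
    · exact ⟨1, ⟨0, by ring⟩, by push_cast; ring⟩
    · exact ⟨-1, ⟨-1, by ring⟩, by push_cast; ring⟩
    · exact ⟨1, ⟨0, by ring⟩, by push_cast; ring⟩
    · exact ⟨-1, ⟨-1, by ring⟩, by push_cast; ring⟩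
    · exact ⟨-1, ⟨-1, by ring⟩, by push_cast; ring⟩
    · exact ⟨-3, ⟨-2, by ring⟩, by push_cast; ring⟩
  obtain ⟨e, he, hpe⟩ := key
  rw [hsum] at hk
  have hk2 : (4 : ℝ) * s ^ 2 + 2 * s * e = 4 * k := by linarith [hk, hpe]
  have hz : (4 : ℤ) * s ^ 2 + 2 * s * e = 4 * k := by exact_mod_cast hk2
  have hse : Odd ((s : ℤ) * e) := (Int.odd_coe_nat s |>.mpr hs).mul he
  obtain ⟨m, hm⟩ := hse
  have h2 : (4 : ℤ) * s ^ 2 + 2 * (2 * m + 1) = 4 * k := by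
    rw [← hm]; linarith [hz]
  have hb : ∃ b : ℤ, (4 : ℤ) * b + 2 * (2 * m + 1) = 4 * k := ⟨(s : ℤ) ^ 2, h2⟩
  obtain ⟨b, hb⟩ := hb
  omega
end

section
/- If d = 4s² with s an odd positive integer, then there are at most 3 pairwise mutually unbiased orthonormal bases of R^d. -/
/-!
Take the first basis as reference frame and rescale by `√d = 2s`: the first vectors of three
further mutually unbiased bases become ±1 vectors of length `d = 4s²` whose pairwise inner
products are `±2s ≡ 2 (mod 4)`. But for signs `a, b, c` one has `ab + ac + bc ≡ -1 (mod 4)`, so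
for any three ±1 vectors the sum of the three pairwise inner products is `≡ -d ≡ 0 (mod 4)`,
whereas `2 + 2 + 2 ≢ 0 (mod 4)`.
-/

open Matrix

theorem Odd.intCast_zmod_four_eq_two_of_abs_eq_two_mul {s : ℕ} (hs : Odd s) {a : ℤ}
    (ha : |a| = 2 * s) : (a : ZMod 4) = 2 := by
  obtain ⟨t, rfl⟩ := hs
  rcases abs_eq_abs.mp (ha.trans (abs_of_nonneg (by positivity)).symm) with rfl | rfl <;>
    push_cast <;> ring_nf <;> reduce_mod_char

variable {ι : Type*} [Fintype ι]

def IsSignVector (x : ι → ℤ) : Prop :=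
  ∀ k, x k = 1 ∨ x k = -1

namespace IsSignVector

theorem intCast_dotProduct_add_dotProduct_add_dotProduct {x y z : ι → ℤ}
    (hx : IsSignVector x) (hy : IsSignVector y) (hz : IsSignVector z) :
    ((x ⬝ᵥ y + x ⬝ᵥ z + y ⬝ᵥ z : ℤ) : ZMod 4) = -Fintype.card ι := by
  have hcoord : ∀ k, ((x k * y k + x k * z k + y k * z k : ℤ) : ZMod 4) = -1 := by
    intro k
    rcases hx k with h₁ | h₁ <;> rcases hy k with h₂ | h₂ <;> rcases hz k with h₃ | h₃ <;>
      rw [h₁, h₂, h₃] <;> decide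
  simp only [dotProduct, ← Finset.sum_add_distrib, Int.cast_sum, hcoord, Finset.sum_neg_distrib,
    Finset.sum_const, Finset.card_univ, nsmul_eq_mul, mul_one]

theorem false_of_abs_dotProduct_eq_two_mul_odd {s : ℕ} (hs : Odd s)
    (hcard : (4 : ℕ) ∣ Fintype.card ι) {x y z : ι → ℤ}
    (hx : IsSignVector x) (hy : IsSignVector y) (hz : IsSignVector z)
    (hxy : |x ⬝ᵥ y| = 2 * s) (hxz : |x ⬝ᵥ z| = 2 * s) (hyz : |y ⬝ᵥ z| = 2 * s) : False := by
  have hsum := intCast_dotProduct_add_dotProduct_add_dotProduct hx hy hz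
  rw [Int.cast_add, Int.cast_add, hs.intCast_zmod_four_eq_two_of_abs_eq_two_mul hxy,
    hs.intCast_zmod_four_eq_two_of_abs_eq_two_mul hxz,
    hs.intCast_zmod_four_eq_two_of_abs_eq_two_mul hyz,
    (ZMod.natCast_eq_zero_iff _ 4).mpr hcard] at hsum
  exact absurd hsum (by decide)

end IsSignVector

omit [Fintype ι] in
theorem exists_isSignVector_intCast_eq {v : ι → ℝ} (hv : ∀ k, |v k| = 1) :
    ∃ x : ι → ℤ, IsSignVector x ∧ ∀ k, (x k : ℝ) = v k := by
  have hsign : ∀ k, ∃ n : ℤ, (n = 1 ∨ n = -1) ∧ (n : ℝ) = v k := fun k ↦ by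
    rcases abs_eq (zero_le_one' ℝ) |>.mp (hv k) with h | h
    · exact ⟨1, .inl rfl, by simp [h]⟩
    · exact ⟨-1, .inr rfl, by simp [h]⟩
  choose x hx using hsign
  exact ⟨x, fun k ↦ (hx k).1, fun k ↦ (hx k).2⟩

namespace Matrix

variable [DecidableEq ι] {R : Type*} [CommRing R]

theorem mulVec_dotProduct_mulVec_of_mul_transpose_eq_one {M : Matrix ι ι R} (hM : M * Mᵀ = 1)
    (u v : ι → R) : (M *ᵥ u) ⬝ᵥ (M *ᵥ v) = u ⬝ᵥ v := by
  rw [dotProduct_mulVec, ← mulVec_transpose, mulVec_mulVec, mul_eq_one_comm.mp hM, one_mulVec]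

end Matrix

theorem exists_isSignVector_abs_dotProduct_eq [DecidableEq ι] {κ : Type*} {E : Matrix ι ι ℝ}
    (hE : E * Eᵀ = 1) {c : ℝ} (hc : 0 < c) (u : κ → ι → ℝ) (hunb : ∀ a k, |E k ⬝ᵥ u a| = c⁻¹)
    (hpair : ∀ a b, a ≠ b → |u a ⬝ᵥ u b| = c⁻¹) :
    ∃ x : κ → ι → ℤ, (∀ a, IsSignVector (x a)) ∧
      ∀ a b, a ≠ b → |((x a ⬝ᵥ x b : ℤ) : ℝ)| = c := by
  have hcoord : ∀ a k, |(c • E *ᵥ u a) k| = 1 := fun a k ↦ by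
    rw [Pi.smul_apply, smul_eq_mul, abs_mul, abs_of_pos hc]
    exact mul_inv_cancel₀ hc.ne' ▸ congrArg (c * ·) (hunb a k)
  choose x hx hxv using fun a ↦ exists_isSignVector_intCast_eq (hcoord a)
  refine ⟨x, hx, fun a b hab ↦ ?_⟩
  have hdot : ((x a ⬝ᵥ x b : ℤ) : ℝ) = c ^ 2 * (u a ⬝ᵥ u b) := calc
    _ = (c • E *ᵥ u a) ⬝ᵥ (c • E *ᵥ u b) := by
      simp only [dotProduct, Int.cast_sum, Int.cast_mul, hxv]
    _ = c ^ 2 * (u a ⬝ᵥ u b) := by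
      rw [smul_dotProduct, dotProduct_smul, mulVec_dotProduct_mulVec_of_mul_transpose_eq_one hE,
        smul_eq_mul, smul_eq_mul, ← mul_assoc, sq]
  rw [hdot, abs_mul, hpair a b hab, abs_of_pos (by positivity)]
  field_simp

theorem at_most_three_real_MUBs_general
    (s : ℕ) (hs : Odd s)
    (m : ℕ) (B : Fin m → Fin (4 * s^2) → (Fin (4 * s^2) → ℝ))
    (horth : ∀ a i j, ∑ k, B a i k * B a j k = if i = j then 1 else 0)
    (hunb : ∀ a a', a ≠ a' →
      ∀ i j, |∑ k, B a i k * B a' j k| = 1 / Real.sqrt (4 * s^2)) :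
    m ≤ 3 := by
  by_contra! hm
  have hs₀ : 0 < s := hs.pos
  have hsqrt : Real.sqrt (4 * s ^ 2) = 2 * s := by
    rw [show (4 : ℝ) * s ^ 2 = (2 * s) ^ 2 by ring, Real.sqrt_sq (by positivity)]
  have hoverlap : ∀ a a', a ≠ a' → ∀ i j, |B a i ⬝ᵥ B a' j| = (2 * s : ℝ)⁻¹ := fun a a' h i j ↦ by
    rw [inv_eq_one_div, ← hsqrt]; exact hunb a a' h i j
  let a : Fin 4 ↪ Fin m := Fin.castLEEmb hm
  let i₀ : Fin (4 * s ^ 2) := ⟨0, by positivity⟩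
  let E : Matrix (Fin (4 * s ^ 2)) (Fin (4 * s ^ 2)) ℝ := B (a 0)
  have hE : E * Eᵀ = 1 := by
    ext i j; exact horth (a 0) i j
  obtain ⟨x, hx, hdot⟩ := exists_isSignVector_abs_dotProduct_eq hE (by positivity)
    (fun j : Fin 3 ↦ B (a j.succ) i₀)
    (fun j k ↦ by rw [dotProduct_comm]; exact hoverlap _ _ (a.injective.ne j.succ_ne_zero) _ _)
    (fun j j' h ↦ hoverlap _ _ (a.injective.ne (Fin.succ_injective _ |>.ne h)) _ _)
  have hdotℤ : ∀ j j', j ≠ j' → |x j ⬝ᵥ x j'| = 2 * s := fun j j' h ↦ by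
    exact_mod_cast hdot j j' h
  exact IsSignVector.false_of_abs_dotProduct_eq_two_mul_odd hs (by simp) (hx 0) (hx 1) (hx 2)
    (hdotℤ 0 1 (by decide)) (hdotℤ 0 2 (by decide)) (hdotℤ 1 2 (by decide))

/-- If `d = 4s²` with `s` an odd positive integer, then there are at most 3
pairwise mutually unbiased orthonormal bases of `ℝ^d`. -/
theorem at_most_three_real_MUBs
    (s : ℕ) (hs : Odd s) (hpos : 0 < s)
    (m : ℕ) (B : Fin m → Fin (4 * s^2) → (Fin (4 * s^2) → ℝ))
    (horth : ∀ a i j, ∑ k, B a i k * B a j k = if i = j then 1 else 0)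
    (hunb : ∀ a a', a ≠ a' →
      ∀ i j, |∑ k, B a i k * B a' j k| = 1 / Real.sqrt (4 * s^2)) :
    m ≤ 3 :=
  at_most_three_real_MUBs_general s hs m B horth hunb
end

section
/- If there exists a Hadamard matrix of order d - √d (where d is a perfect square), then there exist at least d - √d pairwise mutually unbiased lattice lines in R^d. -/
/-- If there exists a Hadamard matrix of order `d - √d` where `d = s²`, then
there exist at least `d - √d` pairwise mutually unbiased lattice lines in
`ℝ^d`. -/
theorem lattice_lines_of_hadamard
    (s : ℕ) (hs : 0 < s)
    (H : Matrix (Fin (s^2 - s)) (Fin (s^2 - s)) ℝ)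
    (hent : ∀ i j, H i j = 1 ∨ H i j = -1)
    (hrows : ∀ i i', i ≠ i' → ∑ j, H i j * H i' j = 0) :
    ∃ v : Fin (s^2 - s) → (Fin (s^2) → ℝ),
      (∀ i k, v i k = 1 ∨ v i k = -1) ∧
      (∀ i i', i ≠ i' → |∑ k, v i k * v i' k| = s) := by
  have hle : s ≤ s ^ 2 := by nlinarith
  have he : s ^ 2 - s + s = s ^ 2 := Nat.sub_add_cancel hle
  refine ⟨fun i k => Sum.elim (H i) (fun _ => (1 : ℝ))
      (finSumFinEquiv.symm (Fin.cast he.symm k)), ?_, ?_⟩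
  · intro i k
    dsimp only
    rcases h : finSumFinEquiv.symm (Fin.cast he.symm k) with j | j
    · simpa using hent i j
    · simp
  · intro i i' hii
    have hsum : ∀ (f : Fin (s ^ 2) → ℝ),
        ∑ k, f k = ∑ k : Fin (s ^ 2 - s + s), f (Fin.cast he k) := by
      intro f
      exact (Fin.sum_congr' f he).symm
    rw [hsum]
    have : ∀ k : Fin (s ^ 2 - s + s), Fin.cast he.symm (Fin.cast he k) = k := by
      intro k; rfl
    simp only [this]
    rw [← finSumFinEquiv.sum_comp (fun x => _)]
    simp only [Equiv.symm_apply_apply]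
    rw [Fintype.sum_sum_type]
    simp only [Sum.elim_inl, Sum.elim_inr, mul_one]
    rw [hrows i i' hii]
    simp [abs_of_nonneg]
end

section
/- The incidence vectors of a (s+1, s)-net span R^{s²}. -/
/-- The incidence vectors of an `(s+1, s)`-net span `ℝ^{s²}`. -/
theorem net_incidence_vectors_span
    (s : ℕ) (hs : 0 < s)
    (m : Fin (s + 1) → Fin s → (Fin (s^2) → ℝ))
    (h01 : ∀ b i k, m b i k = 0 ∨ m b i k = 1)
    (hwt : ∀ b i, ∑ k, m b i k = s)
    (hdisj : ∀ b i j, i ≠ j → ∑ k, m b i k * m b j k = 0)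
    (hcross : ∀ b c i j, b ≠ c → ∑ k, m b i k * m c j k = 1) :
    Submodule.span ℝ (Set.range fun p : Fin (s + 1) × Fin s => m p.1 p.2) = ⊤ := by
  classical
  have hnn : ∀ b i k, (0:ℝ) ≤ m b i k := by
    intro b i k; rcases h01 b i k with h | h <;> simp [h]
  -- within a block, supports are disjoint pointwise
  have hz : ∀ b i j k, i ≠ j → m b i k * m b j k = 0 := by
    intro b i j k hij
    have h := (Finset.sum_eq_zero_iff_of_nonneg (fun k _ =>
      mul_nonneg (hnn b i k) (hnn b j k))).mp (hdisj b i j hij)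
    exact h k (Finset.mem_univ k)
  -- each block's column sums are 1
  have hcol : ∀ b k, ∑ i, m b i k = 1 := by
    intro b k₀
    have hle : ∀ k ∈ (Finset.univ : Finset (Fin (s^2))), ∑ i, m b i k ≤ 1 := by
      intro k _
      by_cases h : ∃ i, m b i k = 1
      · obtain ⟨i₀, hi₀⟩ := h
        have h1 : ∑ i, m b i k = m b i₀ k := by
          apply Finset.sum_eq_single
          · intro j _ hj
            have h2 := hz b i₀ j k (Ne.symm hj)
            rw [hi₀, one_mul] at h2; exact h2
          · intro h'; exact absurd (Finset.mem_univ i₀) h'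
        rw [h1, hi₀]
      · push_neg at h
        have h1 : ∑ i, m b i k = 0 := Finset.sum_eq_zero fun i _ => by
          rcases h01 b i k with h' | h'
          · exact h'
          · exact absurd h' (h i)
        rw [h1]; norm_num
    have hsum : ∑ k : Fin (s^2), (∑ i, m b i k) = ∑ k : Fin (s^2), (1:ℝ) := by
      rw [Finset.sum_comm]
      simp only [hwt, Finset.sum_const, Finset.card_univ, Fintype.card_fin,
        nsmul_eq_mul, mul_one]
      push_cast; ring
    exact (Finset.sum_eq_sum_iff_of_le hle).mp hsum k₀ (Finset.mem_univ k₀)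
  -- diagonal of the Gram-type matrix
  have hDdiag : ∀ k, (∑ p : Fin (s+1) × Fin s, m p.1 p.2 k * m p.1 p.2 k) = (s:ℝ) + 1 := by
    intro k
    have h1 : (∑ p : Fin (s+1) × Fin s, m p.1 p.2 k * m p.1 p.2 k)
        = ∑ p : Fin (s+1) × Fin s, m p.1 p.2 k :=
      Finset.sum_congr rfl fun p _ => by rcases h01 p.1 p.2 k with h | h <;> simp [h]
    rw [h1, Fintype.sum_prod_type]
    simp [hcol]
  -- off-diagonal entries are at most 1 (two points lie on at most one line)
  have hDle : ∀ k l, k ≠ l → (∑ p : Fin (s+1) × Fin s, m p.1 p.2 k * m p.1 p.2 l) ≤ 1 := by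
    intro k l hkl
    by_cases h : ∃ p : Fin (s+1) × Fin s, m p.1 p.2 k = 1 ∧ m p.1 p.2 l = 1
    · obtain ⟨p₀, hp₀k, hp₀l⟩ := h
      have h1 : (∑ p : Fin (s+1) × Fin s, m p.1 p.2 k * m p.1 p.2 l)
          = m p₀.1 p₀.2 k * m p₀.1 p₀.2 l := by
        apply Finset.sum_eq_single
        · intro q _ hq
          rcases h01 q.1 q.2 k with h1 | h1
          · rw [h1, zero_mul]
          rcases h01 q.1 q.2 l with h2 | h2
          · rw [h2, mul_zero]
          exfalso
          by_cases hb : q.1 = p₀.1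
          · have hij : q.2 ≠ p₀.2 := fun h' => hq (Prod.ext hb h')
            have h3 := hz q.1 q.2 p₀.2 k hij
            rw [h1, one_mul, hb] at h3
            rw [hp₀k] at h3
            exact one_ne_zero h3
          · have hc := hcross q.1 p₀.1 q.2 p₀.2 hb
            have hsub : ({k, l} : Finset (Fin (s^2))) ⊆ Finset.univ := Finset.subset_univ _
            have h4 := Finset.sum_le_sum_of_subset_of_nonneg hsub
              (fun r _ _ => mul_nonneg (hnn q.1 q.2 r) (hnn p₀.1 p₀.2 r))
            have hpair : ∑ r ∈ ({k, l} : Finset (Fin (s^2))),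
                m q.1 q.2 r * m p₀.1 p₀.2 r = 2 := by
              rw [Finset.sum_pair hkl, h1, h2, hp₀k, hp₀l]; norm_num
            rw [hpair, hc] at h4
            linarith
        · intro h'; exact absurd (Finset.mem_univ p₀) h'
      rw [h1, hp₀k, hp₀l]; norm_num
    · push_neg at h
      have h1 : (∑ p : Fin (s+1) × Fin s, m p.1 p.2 k * m p.1 p.2 l) = 0 :=
        Finset.sum_eq_zero fun p _ => by
          rcases h01 p.1 p.2 k with h1 | h1
          · rw [h1, zero_mul]
          rcases h01 p.1 p.2 l with h2 | h2
          · rw [h2, mul_zero]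
          · exact absurd h2 (h p h1)
      rw [h1]; norm_num
  -- counting forces the Gram matrix to be sI + J
  have hDall : ∀ q : Fin (s^2) × Fin (s^2),
      (∑ p : Fin (s+1) × Fin s, m p.1 p.2 q.1 * m p.1 p.2 q.2)
        = (if q.1 = q.2 then (s:ℝ) + 1 else 1) := by
    have hle : ∀ q ∈ (Finset.univ : Finset (Fin (s^2) × Fin (s^2))),
        (∑ p : Fin (s+1) × Fin s, m p.1 p.2 q.1 * m p.1 p.2 q.2)
          ≤ (if q.1 = q.2 then (s:ℝ) + 1 else 1) := by
      intro q _
      split_ifs with h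
      · rw [show q.2 = q.1 from h.symm, hDdiag]
      · exact hDle q.1 q.2 h
    have hsum : ∑ q : Fin (s^2) × Fin (s^2),
        (∑ p : Fin (s+1) × Fin s, m p.1 p.2 q.1 * m p.1 p.2 q.2)
        = ∑ q : Fin (s^2) × Fin (s^2), (if q.1 = q.2 then (s:ℝ) + 1 else 1) := by
      have lhs : ∑ q : Fin (s^2) × Fin (s^2),
          (∑ p : Fin (s+1) × Fin s, m p.1 p.2 q.1 * m p.1 p.2 q.2)
          = ((s:ℝ)+1) * s * ((s:ℝ) * s) := by
        rw [Finset.sum_comm]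
        have h1 : ∀ p : Fin (s+1) × Fin s,
            (∑ q : Fin (s^2) × Fin (s^2), m p.1 p.2 q.1 * m p.1 p.2 q.2) = (s:ℝ) * s := by
          intro p
          rw [Fintype.sum_prod_type, ← Finset.sum_mul_sum, hwt]
        rw [Finset.sum_congr rfl fun p _ => h1 p]
        simp only [Finset.sum_const, Finset.card_univ, Fintype.card_prod, Fintype.card_fin,
          nsmul_eq_mul]
        push_cast; ring
      have rhs : ∑ q : Fin (s^2) × Fin (s^2), (if q.1 = q.2 then (s:ℝ) + 1 else 1)
          = ((s:ℝ)+1) * s * ((s:ℝ) * s) := by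
        have h2 : ∀ q : Fin (s^2) × Fin (s^2), (if q.1 = q.2 then (s:ℝ) + 1 else 1)
            = 1 + (if q.1 = q.2 then (s:ℝ) else 0) := by
          intro q; split_ifs <;> ring
        rw [Finset.sum_congr rfl fun q _ => h2 q, Finset.sum_add_distrib]
        have h3 : ∑ q : Fin (s^2) × Fin (s^2), (if q.1 = q.2 then (s:ℝ) else 0)
            = (s:ℝ)^2 * s := by
          rw [Fintype.sum_prod_type]
          simp [Finset.sum_ite_eq]
        rw [h3]
        simp only [Finset.sum_const, Finset.card_univ, Fintype.card_prod, Fintype.card_fin,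
          nsmul_eq_mul, mul_one]
        push_cast; ring
      rw [lhs, rhs]
    intro q
    exact (Finset.sum_eq_sum_iff_of_le hle).mp hsum q (Finset.mem_univ q)
  -- now the spanning argument via dual functionals
  by_contra hn
  obtain ⟨f, hf0, hfmap⟩ := Submodule.exists_dual_map_eq_bot_of_lt_top
    (lt_top_iff_ne_top.mpr hn) inferInstance
  -- f vanishes on every incidence vector
  have hfm : ∀ p : Fin (s+1) × Fin s, f (m p.1 p.2) = 0 := by
    intro p
    have hmem : m p.1 p.2 ∈ Submodule.span ℝ
        (Set.range fun p : Fin (s + 1) × Fin s => m p.1 p.2) :=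
      Submodule.subset_span ⟨p, rfl⟩
    have h1 : f (m p.1 p.2) ∈ Submodule.map f
        (Submodule.span ℝ (Set.range fun p : Fin (s + 1) × Fin s => m p.1 p.2)) :=
      ⟨m p.1 p.2, hmem, rfl⟩
    rw [hfmap] at h1
    simpa using h1
  set x : Fin (s^2) → ℝ := fun k => f (fun j => if k = j then 1 else 0) with hx
  have hfv : ∀ v : Fin (s^2) → ℝ, f v = ∑ k, v k * x k := by
    intro v
    conv_lhs => rw [pi_eq_sum_univ v, map_sum]
    exact Finset.sum_congr rfl fun k _ => by rw [map_smul, smul_eq_mul, hx]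
  have horth : ∀ p : Fin (s+1) × Fin s, ∑ k, m p.1 p.2 k * x k = 0 := by
    intro p; rw [← hfv]; exact hfm p
  -- expand ∑_p ⟨A p, x⟩² = 0
  have key : (0:ℝ) = ∑ q : Fin (s^2) × Fin (s^2), x q.1 * x q.2 *
      (∑ p : Fin (s+1) × Fin s, m p.1 p.2 q.1 * m p.1 p.2 q.2) := by
    have h0 : ∑ p : Fin (s+1) × Fin s, (∑ k, m p.1 p.2 k * x k) ^ 2 = 0 :=
      Finset.sum_eq_zero fun p _ => by rw [horth p]; ring
    rw [← h0]
    have expand : ∀ p : Fin (s+1) × Fin s, (∑ k, m p.1 p.2 k * x k) ^ 2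
        = ∑ q : Fin (s^2) × Fin (s^2), (m p.1 p.2 q.1 * x q.1) * (m p.1 p.2 q.2 * x q.2) := by
      intro p
      rw [sq, Fintype.sum_prod_type, Finset.sum_mul_sum]
    rw [Finset.sum_congr rfl fun p _ => expand p, Finset.sum_comm]
    refine Finset.sum_congr rfl fun q _ => ?_
    rw [Finset.mul_sum]
    exact Finset.sum_congr rfl fun p _ => by ring
  have key2 : (0:ℝ) = (∑ k, x k) * (∑ k, x k) + (s:ℝ) * ∑ k, x k * x k := by
    rw [key, Finset.sum_congr rfl fun q _ => by rw [hDall q]]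
    have h2 : ∀ q : Fin (s^2) × Fin (s^2),
        x q.1 * x q.2 * (if q.1 = q.2 then (s:ℝ) + 1 else 1)
        = x q.1 * x q.2 + (if q.1 = q.2 then (s:ℝ) * (x q.1 * x q.2) else 0) := by
      intro q; split_ifs <;> ring
    rw [Finset.sum_congr rfl fun q _ => h2 q, Finset.sum_add_distrib]
    congr 1
    · rw [Fintype.sum_prod_type, Finset.sum_mul_sum]
    · rw [Fintype.sum_prod_type, Finset.mul_sum]
      simp [Finset.sum_ite_eq]
  -- both summands nonneg, hence x = 0
  have hx0 : ∀ k, x k = 0 := by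
    intro k₀
    have h1 : (0:ℝ) ≤ (∑ k, x k) * (∑ k, x k) := mul_self_nonneg _
    have h3 : x k₀ * x k₀ ≤ ∑ k, x k * x k :=
      Finset.single_le_sum (fun k _ => mul_self_nonneg (x k)) (Finset.mem_univ k₀)
    have hs' : (0:ℝ) < s := by exact_mod_cast hs
    have h5 : x k₀ * x k₀ ≤ 0 := by
      nlinarith [mul_le_mul_of_nonneg_left h3 hs'.le]
    exact mul_self_eq_zero.mp (le_antisymm h5 (mul_self_nonneg _))
  apply hf0
  refine LinearMap.ext fun v => ?_
  rw [hfv v]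
  simp [hx0]
end

section
/- In dimension d = 4, given the three real Latin MUBs (constructed from the three parallel classes of a (3,2)-net with the 2×2 Hadamard matrix), there is no unit vector y ∈ C^4 that is unbiased to all 12 basis vectors, i.e., with |⟨y, v⟩| = 1/2 for all vectors v in the three bases. -/
/-- The three Latin MUBs in dimension 4 (rows, to be scaled by `1/√2`). -/
def latinMUB4 : Fin 3 → Matrix (Fin 4) (Fin 4) ℂ :=
  ![!![1, 1, 0, 0; 1, -1, 0, 0; 0, 0, 1, 1; 0, 0, 1, -1],
    !![1, 0, 1, 0; 1, 0, -1, 0; 0, 1, 0, 1; 0, 1, 0, -1],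
    !![1, 0, 0, 1; 1, 0, 0, -1; 0, 1, 1, 0; 0, 1, -1, 0]]

/-!
Each of the six basis vectors of `B₁, B₂, B₃` supported on the first three coordinates
has the form `(e_i ± e_j)/√2` with `i < j ≤ 2`. Unbiasedness to such a pair, viewed in the real
inner product space `ℂ ≅ ℝ²`, says `‖y_i + y_j‖ = ‖y_i - y_j‖ = 1/√2`: so `y₀, y₁, y₂` are pairwise
orthogonal and, by Pythagoras, all of squared length `1/4`. Three pairwise orthogonal nonzero
vectors in the plane do not exist.
-/

open Module InnerProductGeometry

section EqualDiagonals

variable {E : Type*} [NormedAddCommGroup E] [InnerProductSpace ℝ E]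

theorem real_inner_eq_zero_of_norm_add_eq_norm_sub {x y : E} (h : ‖x + y‖ = ‖x - y‖) :
    inner ℝ x y = 0 :=
  (inner_eq_zero_iff_angle_eq_pi_div_two x y).2
    ((norm_add_eq_norm_sub_iff_angle_eq_pi_div_two x y).1 h)

theorem norm_sq_add_norm_sq_of_norm_add_eq_norm_sub {x y : E} {s : ℝ} (hadd : ‖x + y‖ = s)
    (hsub : ‖x - y‖ = s) : ‖x‖ ^ 2 + ‖y‖ ^ 2 = s ^ 2 := by
  rw [← hadd, norm_add_sq_real, real_inner_eq_zero_of_norm_add_eq_norm_sub (hadd.trans hsub.symm)]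
  ring

theorem three_le_finrank_of_pairwise_norm_add_eq_norm_sub [FiniteDimensional ℝ E]
    {v : Fin 3 → E} {s : ℝ} (hs : s ≠ 0)
    (hv : Pairwise fun i j => ‖v i + v j‖ = s ∧ ‖v i - v j‖ = s) : 3 ≤ finrank ℝ E := by
  have hsq {i j : Fin 3} (hij : i ≠ j) : ‖v i‖ ^ 2 + ‖v j‖ ^ 2 = s ^ 2 :=
    norm_sq_add_norm_sq_of_norm_add_eq_norm_sub (hv hij).1 (hv hij).2
  have hne : ∀ i, v i ≠ 0 := by
    have h01 := hsq (i := 0) (j := 1) (by decide)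
    have h02 := hsq (i := 0) (j := 2) (by decide)
    have h12 := hsq (i := 1) (j := 2) (by decide)
    have hs2 : 0 < s ^ 2 := by positivity
    intro i hi
    have : ‖v i‖ ^ 2 = 0 := by simp [hi]
    fin_cases i <;> simp only [Fin.zero_eta, Fin.mk_one, Fin.reduceFinMk] at this <;> linarith
  have hind : LinearIndependent ℝ v := linearIndependent_of_ne_zero_of_inner_eq_zero hne
    fun i j hij => real_inner_eq_zero_of_norm_add_eq_norm_sub ((hv hij).1.trans (hv hij).2.symm)
  simpa using hind.fintype_card_le_finrank

end EqualDiagonals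

theorem star_latinMUB4 (b r i) : star (latinMUB4 b r i) = latinMUB4 b r i := by
  fin_cases b <;> fin_cases r <;> fin_cases i <;> simp [latinMUB4]

theorem norm_sum_latinMUB4_mul_eq_of_unbiased {y : Fin 4 → ℂ} {b : Fin 3} {r : Fin 4}
    (h : ‖∑ i, star (latinMUB4 b r i / (Real.sqrt 2 : ℂ)) * y i‖ = 1 / 2) :
    ‖∑ i, latinMUB4 b r i * y i‖ = Real.sqrt 2 / 2 := by
  have hsum : ∑ i, star (latinMUB4 b r i / (Real.sqrt 2 : ℂ)) * y i
      = (∑ i, latinMUB4 b r i * y i) / (Real.sqrt 2 : ℂ) := by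
    simp only [star_div₀, star_latinMUB4, Complex.star_def, Complex.conj_ofReal, Finset.sum_div,
      div_mul_eq_mul_div]
  have hsqrt : (0 : ℝ) < Real.sqrt 2 := by positivity
  rw [hsum, norm_div, Complex.norm_real, Real.norm_of_nonneg hsqrt.le] at h
  field_simp at h
  nlinarith [Real.sq_sqrt (zero_le_two : (0 : ℝ) ≤ 2)]

/-- In dimension 4, no unit vector `y ∈ ℂ⁴` is unbiased to all 12 vectors of
the three real Latin MUBs. -/
theorem latin_MUBs_dim_four_not_extendible :
    ¬ ∃ y : Fin 4 → ℂ,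
      (∑ i, ‖y i‖ ^ 2 = 1) ∧
      (∀ (b : Fin 3) (r : Fin 4),
        ‖∑ i, star (latinMUB4 b r i / (Real.sqrt 2 : ℂ)) * y i‖ = 1 / 2) := by
  rintro ⟨y, -, hy⟩
  have row (b : Fin 3) (r : Fin 4) := norm_sum_latinMUB4_mul_eq_of_unbiased (hy b r)
  have hlt : ∀ i j : Fin 3, i < j →
      ‖y i.castSucc + y j.castSucc‖ = √2 / 2 ∧ ‖y i.castSucc - y j.castSucc‖ = √2 / 2 := by
    have h01 := row 0 0; have h01' := row 0 1
    have h02 := row 1 0; have h02' := row 1 1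
    have h12 := row 2 2; have h12' := row 2 3
    simp only [latinMUB4, Fin.isValue, Matrix.cons_val_zero, Matrix.of_apply, Matrix.cons_val',
      Matrix.cons_val_fin_one, Fin.sum_univ_four, one_mul, Matrix.cons_val_one, Matrix.cons_val,
      zero_mul, add_zero, neg_mul, ← sub_eq_add_neg, zero_add] at h01 h01' h02 h02' h12 h12'
    intro i j hij
    fin_cases i <;> fin_cases j <;> simp_all
  have hv : Pairwise fun i j : Fin 3 =>
      ‖y i.castSucc + y j.castSucc‖ = √2 / 2 ∧ ‖y i.castSucc - y j.castSucc‖ = √2 / 2 := by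
    intro i j hij
    rcases hij.lt_or_gt with h | h
    · exact hlt i j h
    · rw [add_comm, norm_sub_rev]
      exact hlt j i h
  have h3 := three_le_finrank_of_pairwise_norm_add_eq_norm_sub (by positivity) hv
  rw [Complex.finrank_real_complex] at h3
  omega
end
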